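/- Let Γ be a simple graph whose set Int(Γ) of internal vertices is nonempty. Then Radius(Int(Γ)) ≤ Radius(Γ), where Int(Γ) is the induced subgraph of Γ on the internal vertices and both radii are computed in ℕ∞. -/

import Mathlib

open SimpleGraph

/-- The link of a set `S` of vertices: all vertices adjacent to every vertex of `S`.
(For `S = ∅` this is all of `V`.) -/
def link {V : Type*} (G : SimpleGraph V) (S : Set V) : Set V :=
  {v : V | ∀ s ∈ S, G.Adj v s}

/-- A nonempty set of vertices is internal if its link is not a clique. -/
def IsInternalSet {V : Type*} (G : SimpleGraph V) (S : Set V) : Prop :=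
  S.Nonempty ∧ ¬ G.IsClique (link G S)

/-- A vertex is internal if its neighborhood is not a clique. -/
def IsInternalVertex {V : Type*} (G : SimpleGraph V) (v : V) : Prop :=
  ¬ G.IsClique (G.neighborSet v)

/-- The induced subgraph on the internal vertices. -/
def intGraph {V : Type*} (G : SimpleGraph V) :
    SimpleGraph ↥{v : V | IsInternalVertex G v} :=
  G.induce {v : V | IsInternalVertex G v}

/-- A graph is H-rigid if it is locally finite, all its internal sets are singletons,
and every nonempty finite set of vertices with nonempty link induces a subgraph all of
whose connected components are complete. -/
def HRigid {V : Type*} (G : SimpleGraph V) : Prop :=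
  (∀ v : V, (G.neighborSet v).Finite) ∧
  (∀ S : Set V, IsInternalSet G S → ∃ v : V, S = {v}) ∧
  (∀ S : Set V, S.Finite → S.Nonempty → (link G S).Nonempty →
    ∀ u w : ↥S, (G.induce S).Reachable u w → u = w ∨ (G.induce S).Adj u w)

/-- The eccentricity of a vertex: the sup of extended graph distances to all vertices. -/
noncomputable def eccentricity {V : Type*} (G : SimpleGraph V) (t : V) : ℕ∞ :=
  ⨆ s : V, G.edist t s

/-- The radius of a graph, valued in `ℕ∞`. -/
noncomputable def graphRadius {V : Type*} (G : SimpleGraph V) : ℕ∞ :=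
  ⨅ t : V, eccentricity G t

/-- The infinite line graph on `ℤ`: `i` and `j` adjacent iff `|i - j| = 1`. -/
def lineZ : SimpleGraph ℤ where
  Adj i j := |i - j| = 1
  symm := ⟨fun i j h => (abs_sub_comm j i).trans h⟩
  loopless := ⟨by intro i h; simp at h⟩

/-- The cycle graph on `ZMod n`: `i` and `j` adjacent iff `i - j = 1` or `j - i = 1`. -/
def cycleZMod (n : ℕ) : SimpleGraph (ZMod n) :=
  SimpleGraph.circulantGraph ({1} : Set (ZMod n))

/-! Interior vertices of a geodesic are internal, since their two neighbours on it are distinct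
and non-adjacent; hence distances between internal vertices do not grow in `intGraph G`. If `t`
is not internal, its neighbourhood is a clique, so every neighbour of `t` is at least as close
as `t` to every other vertex; the second vertex of a geodesic from `t` to an internal vertex is
such a neighbour which is itself internal. So every eccentricity of `G` is bounded below by
an eccentricity of `intGraph G`. -/

section

variable {V : Type*} {G : SimpleGraph V}

lemma isInternalVertex_of_adj_of_adj {w x y : V} (hx : G.Adj w x) (hy : G.Adj w y)
    (hxy : x ≠ y) (hnadj : ¬ G.Adj x y) : IsInternalVertex G w :=
  fun hcl => hnadj (hcl hx hy hxy)

namespace SimpleGraph.Walk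

@[simp]
lemma length_induce {s : Set V} {u v : V} (p : G.Walk u v) (hp : ∀ x ∈ p.support, x ∈ s) :
    (p.induce s hp).length = p.length := by
  induction p with
  | nil => rfl
  | cons _ _ ih => simp [ih]

lemma isInternalVertex_snd_of_length_eq_dist {u a b v : V} (hua : G.Adj u a) (hab : G.Adj a b)
    (r : G.Walk b v) (hp : (cons hua (cons hab r)).length = G.dist u v) :
    IsInternalVertex G a := by
  simp only [length_cons] at hp
  refine isInternalVertex_of_adj_of_adj hua.symm hab (fun hub => ?_) (fun hub => ?_)
  · subst hub
    have := dist_le r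
    omega
  · have := dist_le (cons hub r)
    simp only [length_cons] at this
    omega

lemma isInternalVertex_of_mem_support_tail {u v : V} (p : G.Walk u v)
    (hp : p.length = G.dist u v) (hv : IsInternalVertex G v) :
    ∀ x ∈ p.support.tail, IsInternalVertex G x := by
  induction p with
  | nil => simp
  | @cons u a v hua q ih =>
    have hq : q.length = G.dist a v := length_eq_dist_of_subwalk hp (isSubwalk_cons q hua)
    rw [support_cons, List.tail_cons, ← cons_tail_support]
    rintro x (_ | ⟨_, hx⟩)
    · cases q with
      | nil => exact hv
      | cons hab r => exact isInternalVertex_snd_of_length_eq_dist hua hab r hp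
    · exact ih hq hv x hx

end SimpleGraph.Walk

lemma intGraph_edist_le (u v : {v : V | IsInternalVertex G v}) :
    (intGraph G).edist u v ≤ G.edist u v := by
  by_cases hr : G.Reachable u v
  · obtain ⟨p, hp⟩ := hr.exists_walk_length_eq_dist
    have hsupp : ∀ x ∈ p.support, x ∈ {v : V | IsInternalVertex G v} := by
      rw [← p.cons_tail_support]
      rintro x (_ | ⟨_, hx⟩)
      · exact u.2
      · exact p.isInternalVertex_of_mem_support_tail hp v.2 x hx
    calc (intGraph G).edist u v ≤ (p.induce _ hsupp).length := edist_le _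
      _ = G.edist u v := by rw [Walk.length_induce, hp, hr.coe_dist_eq_edist]
  · simp [edist_eq_top_of_not_reachable hr]

lemma exists_adj_isInternalVertex_of_reachable {t v : V} (hv : IsInternalVertex G v)
    (htv : t ≠ v) (hr : G.Reachable t v) : ∃ w, G.Adj t w ∧ IsInternalVertex G w := by
  obtain ⟨p, hp⟩ := hr.exists_walk_length_eq_dist
  cases p with
  | nil => exact absurd rfl htv
  | cons htw q =>
    exact ⟨_, htw, Walk.isInternalVertex_of_mem_support_tail _ hp hv _ q.start_mem_support⟩

lemma edist_le_of_adj_of_not_isInternalVertex {t t' s : V} (ht : ¬ IsInternalVertex G t)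
    (htt' : G.Adj t t') (hst : s ≠ t) : G.edist t' s ≤ G.edist t s := by
  by_cases hr : G.Reachable t s
  · obtain ⟨p, hp⟩ := hr.exists_walk_length_eq_edist
    rw [← hp]
    cases p with
    | nil => exact absurd rfl hst
    | @cons _ a _ hta q =>
      rcases eq_or_ne t' a with rfl | ht'a
      · exact (edist_le q).trans (by simp)
      · exact edist_le (.cons (not_not.mp ht htt' hta ht'a) q)
  · simp [edist_eq_top_of_not_reachable hr]

lemma exists_isInternalVertex_forall_edist_le_eccent
    (hne : {v : V | IsInternalVertex G v}.Nonempty) (t : V) :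
    ∃ t', IsInternalVertex G t' ∧ ∀ s, IsInternalVertex G s → G.edist t' s ≤ G.eccent t := by
  by_cases ht : IsInternalVertex G t
  · exact ⟨t, ht, fun _ _ => edist_le_eccent⟩
  obtain ⟨v, hv⟩ := hne
  by_cases hr : G.Reachable t v
  · obtain ⟨t', htt', ht'⟩ :=
      exists_adj_isInternalVertex_of_reachable hv (by rintro rfl; exact ht hv) hr
    refine ⟨t', ht', fun s hs => ?_⟩
    exact (edist_le_of_adj_of_not_isInternalVertex ht htt' (by rintro rfl; exact ht hs)).trans
      edist_le_eccent
  · have : G.eccent t = ⊤ := top_le_iff.mp (edist_eq_top_of_not_reachable hr ▸ edist_le_eccent)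
    exact ⟨v, hv, fun _ _ => this ▸ le_top⟩

end

/-- If a graph has an internal vertex, then the radius of its internal
graph is at most the radius of the graph. -/
theorem stmt18 {V : Type*} (G : SimpleGraph V)
    (hne : {v : V | IsInternalVertex G v}.Nonempty) :
    graphRadius (intGraph G) ≤ graphRadius G := by
  refine le_iInf fun t => ?_
  obtain ⟨t', ht', hle⟩ := exists_isInternalVertex_forall_edist_le_eccent hne t
  exact iInf_le_of_le ⟨t', ht'⟩ <| iSup_le fun s => (intGraph_edist_le _ s).trans (hle s s.2)
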